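/- arXiv:2402.06447 — 2 statements merged into one kernel-verified Lean document; each statement's English description precedes it below -/
import Mathlib

section
/- Let f : ℝ^n → ℝ^m be locally Lipschitz at x₀, and suppose every element of the Clarke generalized Jacobian ∂f(x₀) has rank m (maximal rank, assuming m ≤ n). Then there exists a neighborhood U of x₀ such that for every y ∈ U, every element of ∂f(y) has rank m; moreover, every neighborhood V ⊆ U of x₀ contains a point y₀ at which f is differentiable with Df(y₀) of rank m. -/
open Filter Topology Pointwise

/-- The Clarke generalized Jacobian of `f` at `x`: the convex hull of all limits of
Jacobians `Df(x_t)` along sequences `x_t → x` of differentiability points of `f`. -/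
noncomputable def clarkeJacobian {E F : Type*} [NormedAddCommGroup E] [NormedSpace ℝ E]
    [NormedAddCommGroup F] [NormedSpace ℝ F] (f : E → F) (x : E) : Set (E →L[ℝ] F) :=
  convexHull ℝ {L : E →L[ℝ] F | ∃ u : ℕ → E, Tendsto u atTop (𝓝 x) ∧
    (∀ t, DifferentiableAt ℝ f (u t)) ∧ Tendsto (fun t => fderiv ℝ f (u t)) atTop (𝓝 L)}

/-- `f` is locally Lipschitz at `x`: Lipschitz on some neighborhood of `x`. -/
def LocallyLipschitzAt {E F : Type*} [NormedAddCommGroup E] [NormedAddCommGroup F]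
    (f : E → F) (x : E) : Prop :=
  ∃ K : NNReal, ∃ s ∈ 𝓝 x, LipschitzOnWith K f s

/-- The set of surjective continuous linear maps between finite-dimensional real normed
spaces is open. -/
lemma aux_isOpen_surjective {E F : Type*} [NormedAddCommGroup E] [NormedSpace ℝ E]
    [NormedAddCommGroup F] [NormedSpace ℝ F] [FiniteDimensional ℝ E] [FiniteDimensional ℝ F]
    [CompleteSpace F] :
    IsOpen {L : E →L[ℝ] F | Function.Surjective L} := by
  rcases subsingleton_or_nontrivial F with hF | hF
  · convert isOpen_univ
    ext L
    simp only [Set.mem_setOf_eq, Set.mem_univ, iff_true]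
    intro y
    exact ⟨0, Subsingleton.elim _ _⟩
  · rw [Metric.isOpen_iff]
    intro L hL
    obtain ⟨g₀, hg₀⟩ := (L : E →ₗ[ℝ] F).exists_rightInverse_of_surjective
      (LinearMap.range_eq_top.2 hL)
    set g : F →L[ℝ] E := LinearMap.toContinuousLinearMap g₀ with hg
    have hLg : ∀ y, L (g y) = y := fun y => LinearMap.congr_fun hg₀ y
    have hgne : g ≠ 0 := by
      intro h
      obtain ⟨y, hy⟩ := exists_ne (0 : F)
      apply hy
      have := hLg y
      rw [h] at this
      simpa using this.symm
    have hgpos : 0 < ‖g‖ := norm_pos_iff.2 hgne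
    refine ⟨‖g‖⁻¹, inv_pos.2 hgpos, ?_⟩
    intro L' hL'
    rw [Metric.mem_ball, dist_eq_norm] at hL'
    -- `L'.comp g = 1 + (L' - L).comp g` is invertible
    have hnorm : ‖-((L' - L).comp g)‖ < 1 := by
      rw [norm_neg]
      calc ‖(L' - L).comp g‖ ≤ ‖L' - L‖ * ‖g‖ := ContinuousLinearMap.opNorm_comp_le _ _
        _ < ‖g‖⁻¹ * ‖g‖ := by exact mul_lt_mul_of_pos_right hL' hgpos
        _ = 1 := inv_mul_cancel₀ (ne_of_gt hgpos)
    set u : (F →L[ℝ] F)ˣ := Units.oneSub _ hnorm with hu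
    have huval : (u : F →L[ℝ] F) = L'.comp g := by
      have h1 : L.comp g = (1 : F →L[ℝ] F) := by
        ext y; exact hLg y
      have : (u : F →L[ℝ] F) = 1 + (L' - L).comp g := by
        rw [hu, Units.val_oneSub, sub_neg_eq_add]
      rw [this, ContinuousLinearMap.sub_comp, h1]
      abel
    intro y
    refine ⟨g ((↑u⁻¹ : F →L[ℝ] F) y), ?_⟩
    have h2 : (↑u : F →L[ℝ] F) ((↑u⁻¹ : F →L[ℝ] F) y) = y := by
      rw [← ContinuousLinearMap.mul_apply, u.mul_inv, ContinuousLinearMap.one_apply]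
    calc L' (g ((↑u⁻¹ : F →L[ℝ] F) y))
        = (L'.comp g) ((↑u⁻¹ : F →L[ℝ] F) y) := rfl
      _ = (↑u : F →L[ℝ] F) ((↑u⁻¹ : F →L[ℝ] F) y) := by rw [huval]
      _ = y := h2

/-- In a finite-dimensional real normed space, the convex hull of a compact set is compact. -/
lemma aux_isCompact_convexHull {E : Type*} [NormedAddCommGroup E] [NormedSpace ℝ E]
    [FiniteDimensional ℝ E] {s : Set E} (hs : IsCompact s) :
    IsCompact (convexHull ℝ s) := by
  classical
  rcases s.eq_empty_or_nonempty with rfl | ⟨p₀, hp₀⟩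
  · simp
  set D := Module.finrank ℝ E + 1 with hD
  set g : (Fin D → ℝ) × (Fin D → E) → E := fun p => ∑ i, p.1 i • p.2 i with hgdef
  have hg : Continuous g := by
    apply continuous_finset_sum
    intro i _
    exact ((continuous_apply i).comp continuous_fst).smul
      ((continuous_apply i).comp continuous_snd)
  have hT : IsCompact ((stdSimplex ℝ (Fin D)) ×ˢ (Set.univ.pi fun _ : Fin D => s)) :=
    (isCompact_stdSimplex _ _).prod (isCompact_univ_pi fun _ => hs)
  have himage : convexHull ℝ s =
      g '' ((stdSimplex ℝ (Fin D)) ×ˢ (Set.univ.pi fun _ : Fin D => s)) := by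
    apply Set.Subset.antisymm
    · intro x hx
      obtain ⟨ι, hι, z, w, hzs, hai, hwpos, hw1, hsum⟩ :=
        eq_pos_convex_span_of_mem_convexHull hx
      have hcard : Fintype.card ι ≤ D := by
        have h1 := hai.card_le_finrank_succ
        have h2 : Module.finrank ℝ (vectorSpan ℝ (Set.range z)) ≤ Module.finrank ℝ E :=
          Submodule.finrank_le _
        omega
      have hcard' : Fintype.card ι ≤ Fintype.card (Fin D) := by simpa using hcard
      obtain ⟨e⟩ : Nonempty (ι ↪ Fin D) := Function.Embedding.nonempty_of_card_le hcard'
      set W : Fin D → ℝ := fun j => if h : ∃ i, e i = j then w h.choose else 0 with hW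
      set Z : Fin D → E := fun j => if h : ∃ i, e i = j then z h.choose else p₀ with hZ
      have hWe : ∀ i, W (e i) = w i := by
        intro i
        have h : ∃ i', e i' = e i := ⟨i, rfl⟩
        have : h.choose = i := e.injective h.choose_spec
        simp only [hW, dif_pos h, this]
      have hZe : ∀ i, Z (e i) = z i := by
        intro i
        have h : ∃ i', e i' = e i := ⟨i, rfl⟩
        have : h.choose = i := e.injective h.choose_spec
        simp only [hZ, dif_pos h, this]
      have hWzero : ∀ j ∉ Finset.univ.image e, W j = 0 := by
        intro j hj
        have : ¬∃ i, e i = j := by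
          intro ⟨i, hi⟩
          exact hj (Finset.mem_image.2 ⟨i, Finset.mem_univ i, hi⟩)
        simp only [hW, dif_neg this]
      refine ⟨(W, Z), ⟨?_, ?_⟩, ?_⟩
      · constructor
        · intro j
          simp only [hW]
          split
          · exact (hwpos _).le
          · exact le_refl 0
        · rw [← Finset.sum_subset (Finset.subset_univ (Finset.univ.image e))
            (fun j _ hj => hWzero j hj)]
          rw [Finset.sum_image (fun a _ b _ h => e.injective h)]
          simp only [hWe]
          exact hw1
      · intro j _
        simp only [hZ]
        split
        · exact hzs (Set.mem_range_self _)
        · exact hp₀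
      · simp only [hgdef]
        rw [← Finset.sum_subset (Finset.subset_univ (Finset.univ.image e))
          (fun j _ hj => by rw [hWzero j hj, zero_smul])]
        rw [Finset.sum_image (fun a _ b _ h => e.injective h)]
        simp only [hWe, hZe]
        exact hsum
    · rintro x ⟨⟨w, v⟩, ⟨hw, hv⟩, rfl⟩
      exact (convex_convexHull ℝ s).sum_mem (fun i _ => hw.1 i) hw.2
        (fun i _ => subset_convexHull ℝ s (hv i (Set.mem_univ i)))
  rw [himage]
  exact hT.image hg

set_option maxHeartbeats 2000000 in
/-- if every element of the Clarke Jacobian of `f` at `x₀` is surjective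
(maximal rank `m ≤ n`), then the same holds on a neighborhood `U` of `x₀`, and every
neighborhood `V ⊆ U` of `x₀` contains a differentiability point of `f` whose derivative
is surjective. -/
theorem clarkeJacobian_maximal_rank_stable {n m : ℕ} (hmn : m ≤ n)
    (f : EuclideanSpace ℝ (Fin n) → EuclideanSpace ℝ (Fin m))
    (x₀ : EuclideanSpace ℝ (Fin n)) (hf : LocallyLipschitzAt f x₀)
    (hrank : ∀ L ∈ clarkeJacobian f x₀, Function.Surjective L) :
    ∃ U ∈ 𝓝 x₀,
      (∀ y ∈ U, ∀ L ∈ clarkeJacobian f y, Function.Surjective L) ∧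
      (∀ V ∈ 𝓝 x₀, V ⊆ U → ∃ y₀ ∈ V, DifferentiableAt ℝ f y₀ ∧
        Function.Surjective (fderiv ℝ f y₀)) := by
  classical
  obtain ⟨K, s, hs, hlip⟩ := hf
  obtain ⟨r, hr0, hrs⟩ := Metric.mem_nhds_iff.1 hs
  have hlipb : LipschitzOnWith K f (Metric.ball x₀ r) := hlip.mono hrs
  -- the "base set" of the Clarke Jacobian
  set B : EuclideanSpace ℝ (Fin n) → Set (EuclideanSpace ℝ (Fin n) →L[ℝ] EuclideanSpace ℝ (Fin m)) := fun x => {L | ∃ u : ℕ → (EuclideanSpace ℝ (Fin n)), Tendsto u atTop (𝓝 x) ∧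
    (∀ t, DifferentiableAt ℝ f (u t)) ∧
    Tendsto (fun t => fderiv ℝ f (u t)) atTop (𝓝 L)} with hBdef
  have hCJ : ∀ x, clarkeJacobian f x = convexHull ℝ (B x) := fun _ => rfl
  -- norm bound on derivatives inside the ball
  have hbound : ∀ z ∈ Metric.ball x₀ r, DifferentiableAt ℝ f z → ‖fderiv ℝ f z‖ ≤ K := by
    intro z hz hdz
    exact hdz.hasFDerivAt.le_of_lipschitzOn (Metric.isOpen_ball.mem_nhds hz) hlipb
  -- elements of `B x` can be approximated by actual derivatives
  have key : ∀ (x : (EuclideanSpace ℝ (Fin n))) (M : (EuclideanSpace ℝ (Fin n)) →L[ℝ] (EuclideanSpace ℝ (Fin m))), M ∈ B x → ∀ ε : ℝ, 0 < ε →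
      ∃ z, dist z x < ε ∧ DifferentiableAt ℝ f z ∧ dist (fderiv ℝ f z) M < ε := by
    rintro x M ⟨u, hu, hud, hufd⟩ ε hε
    obtain ⟨N₁, h₁⟩ := (Metric.tendsto_atTop.1 hu) ε hε
    obtain ⟨N₂, h₂⟩ := (Metric.tendsto_atTop.1 hufd) ε hε
    exact ⟨u (max N₁ N₂), h₁ _ (le_max_left _ _), hud _, h₂ _ (le_max_right _ _)⟩
  have hinv : Tendsto (fun k : ℕ => 1 / ((k : ℝ) + 1)) atTop (𝓝 0) :=
    tendsto_one_div_add_atTop_nhds_zero_nat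
  have hinvpos : ∀ k : ℕ, (0 : ℝ) < 1 / ((k : ℝ) + 1) := fun k => by positivity
  -- the base set at `x₀` is bounded by K
  have hB0bdd : ∀ M ∈ B x₀, ‖M‖ ≤ K := by
    rintro M ⟨u, hu, hud, hufd⟩
    have hev : ∀ᶠ t in atTop, ‖fderiv ℝ f (u t)‖ ≤ K := by
      filter_upwards [hu (Metric.ball_mem_nhds x₀ hr0)] with t ht
      exact hbound _ ht (hud t)
    exact le_of_tendsto hufd.norm hev
  -- the base set at `x₀` is closed
  have hB0closed : IsClosed (B x₀) := by
    apply IsSeqClosed.isClosed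
    intro Lseq L hmem hconv
    choose z hz1 hz2 hz3 using fun k =>
      key x₀ (Lseq k) (hmem k) (1 / ((k : ℝ) + 1)) (hinvpos k)
    refine ⟨z, ?_, hz2, ?_⟩
    · rw [tendsto_iff_dist_tendsto_zero]
      exact squeeze_zero (fun k => dist_nonneg) (fun k => (hz1 k).le) hinv
    · rw [tendsto_iff_dist_tendsto_zero]
      have hd : ∀ k, dist (fderiv ℝ f (z k)) L ≤ 1 / ((k : ℝ) + 1) + dist (Lseq k) L := by
        intro k
        calc dist (fderiv ℝ f (z k)) L ≤ dist (fderiv ℝ f (z k)) (Lseq k) + dist (Lseq k) L :=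
              dist_triangle _ _ _
          _ ≤ 1 / ((k : ℝ) + 1) + dist (Lseq k) L := by
              have := (hz3 k).le; linarith
      have hlim : Tendsto (fun k : ℕ => 1 / ((k : ℝ) + 1) + dist (Lseq k) L) atTop (𝓝 0) := by
        have h2 := tendsto_iff_dist_tendsto_zero.1 hconv
        simpa using hinv.add h2
      exact squeeze_zero (fun k => dist_nonneg) hd hlim
  -- the base set at `x₀` is compact
  have hB0cpt : IsCompact (B x₀) := by
    refine (isCompact_closedBall (0 : (EuclideanSpace ℝ (Fin n)) →L[ℝ] (EuclideanSpace ℝ (Fin m))) K).of_isClosed_subset hB0closed ?_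
    intro M hM
    rw [Metric.mem_closedBall, dist_zero_right]
    exact hB0bdd M hM
  -- hence the Clarke Jacobian at x₀ is compact
  have hullcpt : IsCompact (clarkeJacobian f x₀) := by
    rw [hCJ]; exact aux_isCompact_convexHull hB0cpt
  have hSopen : IsOpen {L : (EuclideanSpace ℝ (Fin n)) →L[ℝ] (EuclideanSpace ℝ (Fin m)) | Function.Surjective L} := aux_isOpen_surjective
  obtain ⟨ε, hε0, hεsub⟩ := hullcpt.exists_thickening_subset_open hSopen
    (fun L hL => hrank L hL)
  -- main stability claim for the base sets
  have main : ∃ δ : ℝ, 0 < δ ∧ δ ≤ r ∧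
      ∀ y ∈ Metric.ball x₀ δ, ∀ M ∈ B y, ∃ M₀ ∈ B x₀, dist M M₀ < ε := by
    by_contra hcon
    push_neg at hcon
    have hr2 : (0 : ℝ) < r / 2 := by linarith
    have hδpos : ∀ k : ℕ, 0 < min (1 / ((k : ℝ) + 1)) (r / 2) :=
      fun k => lt_min (hinvpos k) hr2
    have hδler : ∀ k : ℕ, min (1 / ((k : ℝ) + 1)) (r / 2) ≤ r := by
      intro k
      exact (min_le_right _ _).trans (by linarith)
    choose y hy M hM hMfar using fun k : ℕ =>
      hcon (min (1 / ((k : ℝ) + 1)) (r / 2)) (hδpos k) (hδler k)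
    choose z hz1 hz2 hz3 using fun k : ℕ =>
      key (y k) (M k) (hM k) (min (1 / ((k : ℝ) + 1)) (r / 2)) (hδpos k)
    have hyball : ∀ k, dist (y k) x₀ < min (1 / ((k : ℝ) + 1)) (r / 2) :=
      fun k => Metric.mem_ball.1 (hy k)
    have hzball : ∀ k, z k ∈ Metric.ball x₀ r := by
      intro k
      rw [Metric.mem_ball]
      calc dist (z k) x₀ ≤ dist (z k) (y k) + dist (y k) x₀ := dist_triangle _ _ _
        _ < min (1 / ((k : ℝ) + 1)) (r / 2) + min (1 / ((k : ℝ) + 1)) (r / 2) := by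
            have := hz1 k; have := hyball k; linarith
        _ ≤ r / 2 + r / 2 := by
            have := min_le_right (1 / ((k : ℝ) + 1)) (r / 2); linarith
        _ = r := by ring
    have hztend : Tendsto z atTop (𝓝 x₀) := by
      rw [tendsto_iff_dist_tendsto_zero]
      have hd : ∀ k : ℕ, dist (z k) x₀ ≤ 2 * (1 / ((k : ℝ) + 1)) := by
        intro k
        have h1 := (hz1 k).le.trans (min_le_left _ _)
        have h2 := (hyball k).le.trans (min_le_left _ _)
        calc dist (z k) x₀ ≤ dist (z k) (y k) + dist (y k) x₀ := dist_triangle _ _ _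
          _ ≤ 2 * (1 / ((k : ℝ) + 1)) := by linarith
      have hlim : Tendsto (fun k : ℕ => 2 * (1 / ((k : ℝ) + 1))) atTop (𝓝 0) := by
        simpa using hinv.const_mul (2 : ℝ)
      exact squeeze_zero (fun k => dist_nonneg) hd hlim
    -- extract a convergent subsequence of the derivatives
    have hmemball : ∀ k, fderiv ℝ f (z k) ∈ Metric.closedBall (0 : (EuclideanSpace ℝ (Fin n)) →L[ℝ] (EuclideanSpace ℝ (Fin m))) K := by
      intro k
      rw [Metric.mem_closedBall, dist_zero_right]
      exact hbound _ (hzball k) (hz2 k)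
    obtain ⟨Mlim, _, φ, hφ, hφconv⟩ :=
      (isCompact_closedBall (0 : (EuclideanSpace ℝ (Fin n)) →L[ℝ] (EuclideanSpace ℝ (Fin m))) K).tendsto_subseq hmemball
    have hMlim : Mlim ∈ B x₀ :=
      ⟨z ∘ φ, hztend.comp hφ.tendsto_atTop, fun t => hz2 (φ t), hφconv⟩
    -- contradiction: `M (φ k)` converges to `Mlim ∈ B x₀` but stays ε away
    have hdist : Tendsto (fun k => dist (M (φ k)) Mlim) atTop (𝓝 0) := by
      have hd : ∀ k : ℕ, dist (M (φ k)) Mlim ≤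
          1 / ((k : ℝ) + 1) + dist (fderiv ℝ f (z (φ k))) Mlim := by
        intro k
        have h1 : dist (fderiv ℝ f (z (φ k))) (M (φ k)) < 1 / ((k : ℝ) + 1) := by
          refine lt_of_lt_of_le ((hz3 (φ k)).trans_le (min_le_left _ _)) ?_
          apply one_div_le_one_div_of_le (by positivity)
          have hk : (k : ℝ) ≤ (φ k : ℝ) := Nat.cast_le.2 hφ.le_apply
          linarith
        calc dist (M (φ k)) Mlim
            ≤ dist (M (φ k)) (fderiv ℝ f (z (φ k))) + dist (fderiv ℝ f (z (φ k))) Mlim :=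
              dist_triangle _ _ _
          _ ≤ 1 / ((k : ℝ) + 1) + dist (fderiv ℝ f (z (φ k))) Mlim := by
              rw [dist_comm] at h1; linarith [h1.le]
      have hlim : Tendsto (fun k : ℕ =>
          1 / ((k : ℝ) + 1) + dist (fderiv ℝ f (z (φ k))) Mlim) atTop (𝓝 0) := by
        have h2 := tendsto_iff_dist_tendsto_zero.1 hφconv
        simpa using hinv.add h2
      exact squeeze_zero (fun k => dist_nonneg) hd hlim
    obtain ⟨k, hk⟩ := (hdist.eventually (gt_mem_nhds hε0)).exists
    exact absurd hk (not_lt.2 (hMfar (φ k) Mlim hMlim))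
  obtain ⟨δ, hδ0, hδr, hnear⟩ := main
  -- part 1: stability of surjectivity on the ball of radius δ
  have hpart1 : ∀ y ∈ Metric.ball x₀ δ, ∀ L ∈ clarkeJacobian f y, Function.Surjective L := by
    intro y hy L hL
    rw [hCJ] at hL
    have hsub : B y ⊆ B x₀ + Metric.ball (0 : (EuclideanSpace ℝ (Fin n)) →L[ℝ] (EuclideanSpace ℝ (Fin m))) ε := by
      intro M hMy
      obtain ⟨M₀, hM₀, hd⟩ := hnear y hy M hMy
      refine Set.mem_add.2 ⟨M₀, hM₀, M - M₀, ?_, by rw [add_sub_cancel]⟩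
      rw [Metric.mem_ball, dist_zero_right, ← dist_eq_norm]
      exact hd
    have hL' : L ∈ convexHull ℝ (B x₀ + Metric.ball (0 : (EuclideanSpace ℝ (Fin n)) →L[ℝ] (EuclideanSpace ℝ (Fin m))) ε) :=
      convexHull_mono hsub hL
    rw [convexHull_add, (convex_ball (0 : (EuclideanSpace ℝ (Fin n)) →L[ℝ] (EuclideanSpace ℝ (Fin m))) ε).convexHull_eq] at hL'
    obtain ⟨A, hA, b, hb, rfl⟩ := Set.mem_add.1 hL'
    apply hεsub
    rw [Metric.mem_thickening_iff]
    refine ⟨A, by rw [hCJ]; exact hA, ?_⟩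
    have hbn : ‖b‖ < ε := mem_ball_zero_iff.1 hb
    rw [dist_eq_norm]
    simpa using hbn
  refine ⟨Metric.ball x₀ δ, Metric.ball_mem_nhds _ hδ0, hpart1, ?_⟩
  -- part 2: existence of differentiability points with surjective derivative
  intro V hV _
  have hae := hlipb.ae_differentiableWithinAt_of_mem (μ := MeasureTheory.volume)
  set W := Metric.ball x₀ δ ∩ interior V with hWdef
  have hWopen : IsOpen W := Metric.isOpen_ball.inter isOpen_interior
  have hWne : W.Nonempty :=
    ⟨x₀, Metric.mem_ball_self hδ0, mem_interior_iff_mem_nhds.2 hV⟩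
  have hWpos : 0 < MeasureTheory.volume W := hWopen.measure_pos _ hWne
  have hexists : ∃ y₀, y₀ ∈ W ∧
      (y₀ ∈ Metric.ball x₀ r → DifferentiableWithinAt ℝ f (Metric.ball x₀ r) y₀) := by
    by_contra hcon
    push_neg at hcon
    have hsub : W ⊆ {x | ¬ (x ∈ Metric.ball x₀ r →
        DifferentiableWithinAt ℝ f (Metric.ball x₀ r) x)} := by
      intro x hx
      obtain ⟨hxr, hxd⟩ := hcon x hx
      exact fun h => hxd (h hxr)
    have h0 : MeasureTheory.volume W = 0 :=
      MeasureTheory.measure_mono_null hsub (MeasureTheory.ae_iff.1 hae)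
    exact absurd h0 (ne_of_gt hWpos)
  obtain ⟨y₀, hy₀W, hy₀d⟩ := hexists
  have hy₀δ : y₀ ∈ Metric.ball x₀ δ := hy₀W.1
  have hy₀r : y₀ ∈ Metric.ball x₀ r :=
    Metric.mem_ball.2 (lt_of_lt_of_le (Metric.mem_ball.1 hy₀δ) hδr)
  have hdiff : DifferentiableAt ℝ f y₀ :=
    (hy₀d hy₀r).differentiableAt (Metric.isOpen_ball.mem_nhds hy₀r)
  refine ⟨y₀, interior_subset hy₀W.2, hdiff, ?_⟩
  apply hpart1 y₀ hy₀δ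
  rw [hCJ]
  exact subset_convexHull ℝ _
    ⟨fun _ => y₀, tendsto_const_nhds, fun _ => hdiff, tendsto_const_nhds⟩
end

section
/- Consider the step-size adaptive ES map F : ℝ^d × (ℝ^d)^μ → ℝ^d defined by F(z, (v₁,…,v_μ)) = (z + Σ_i w_i v_i)·exp(−(1/d_σ)·(√(μ_eff)·‖Σ_i w_i v_i‖/E − 1)), with w_i > 0 summing to 1, μ_eff = Σ w_i², d_σ > 0, E > 0. Then the map h ↦ F(0, h) is differentiable at h = 0 with derivative h = (h₁,…,h_μ) ↦ exp(1/d_σ)·Σ_{i=1}^μ w_i h_i, which is a surjective linear map onto ℝ^d. -/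
open Finset

/-- the step-size adaptive ES map `h ↦ F(0, h)` is differentiable at `0`
with derivative `h ↦ exp(1/d_σ) Σ wᵢ hᵢ`, a surjective linear map onto `ℝ^d`. -/
theorem stepsize_ES_differentiable_at_zero {d μ : ℕ} (hd : 0 < d) (hμ : 0 < μ)
    (w : Fin μ → ℝ) (hw : ∀ i, 0 < w i) (hsum : ∑ i, w i = 1)
    (μeff : ℝ) (hμeff : μeff = ∑ i, (w i) ^ 2)
    (dσ En : ℝ) (hdσ : 0 < dσ) (hEn : 0 < En) :
    ∃ L : (Fin μ → EuclideanSpace ℝ (Fin d)) →L[ℝ] EuclideanSpace ℝ (Fin d),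
      (∀ h, L h = Real.exp (1 / dσ) • ∑ i, w i • h i) ∧
      HasFDerivAt
        (fun h : Fin μ → EuclideanSpace ℝ (Fin d) =>
          Real.exp (-(1 / dσ) * (Real.sqrt μeff * ‖∑ i, w i • h i‖ / En - 1)) •
            ∑ i, w i • h i)
        L 0 ∧
      Function.Surjective L := by
  set E := EuclideanSpace ℝ (Fin d)
  set e := Real.exp (1 / dσ) with he
  set S : (Fin μ → E) →L[ℝ] E := ∑ i, w i • (ContinuousLinearMap.proj i : (Fin μ → E) →L[ℝ] E)
    with hS
  have hSapp : ∀ h : Fin μ → E, S h = ∑ i, w i • h i := by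
    intro h
    simp [hS, ContinuousLinearMap.sum_apply]
  refine ⟨e • S, ?_, ?_, ?_⟩
  · intro h
    simp [ContinuousLinearMap.smul_apply, hSapp]
  · rw [hasFDerivAt_iff_isLittleO_nhds_zero]
    set g : (Fin μ → E) → ℝ :=
      fun h => Real.exp (-(1 / dσ) * (Real.sqrt μeff * ‖∑ i, w i • h i‖ / En - 1)) with hg
    have hcont : Filter.Tendsto g (nhds 0) (nhds e) := by
      have : Continuous g := by
        apply Real.continuous_exp.comp
        fun_prop
      have h0 : g 0 = e := by simp [hg, he]
      simpa [h0] using this.tendsto 0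
    have hlo : (fun h : Fin μ → E => g h - e) =o[nhds 0] (fun _ => (1 : ℝ)) := by
      rw [Asymptotics.isLittleO_one_iff]
      simpa using hcont.sub_const e
    have hbo : (fun h : Fin μ → E => S h) =O[nhds 0] (fun h => h) :=
      S.isBigO_id _
    have := hlo.smul_isBigO hbo
    simp only [one_smul] at this
    refine this.congr' ?_ Filter.EventuallyEq.rfl
    filter_upwards with h
    simp [hSapp, sub_smul, hg, ContinuousLinearMap.smul_apply]
  · intro x
    refine ⟨fun _ => e⁻¹ • x, ?_⟩
    have hε : e ≠ 0 := Real.exp_ne_zero _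
    simp only [ContinuousLinearMap.smul_apply, hSapp]
    rw [← Finset.sum_smul, hsum]
    simp [smul_smul, hε]
end
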